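/- If w is a geodesic word for an element g of minimal length in its conjugacy class of B_3, then w is cyclically reduced and every cyclic permutation of w is also geodesic. -/

import Mathlib

def B3Rel : Set (FreeGroup Bool) :=
  {FreeGroup.of true * FreeGroup.of false * FreeGroup.of true *
    (FreeGroup.of false * FreeGroup.of true * FreeGroup.of false)⁻¹}

abbrev B3 := PresentedGroup B3Rel

def ga : B3 := PresentedGroup.of true
def gb : B3 := PresentedGroup.of false

/-- generator by a boolean: `true ↦ a`, `false ↦ b`. -/
def gen (x : Bool) : B3 := if x then ga else gb

/-- A letter: first component is the generator (`true` = a), second the sign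
(`true` = positive). -/
abbrev Letter := Bool × Bool

def evalLetter (l : Letter) : B3 := if l.2 then gen l.1 else (gen l.1)⁻¹

def evalWord (w : List Letter) : B3 := (w.map evalLetter).prod

/-- `w` is geodesic: no shorter word represents the same element. -/
def IsGeodesic (w : List Letter) : Prop :=
  ∀ v : List Letter, evalWord v = evalWord w → w.length ≤ v.length

/-- `w` is freely reduced. -/
def Reduced (w : List Letter) : Prop :=
  w.Chain' fun x y => ¬ (x.1 = y.1 ∧ x.2 = !y.2)

def la : Letter := (true, true)
def lA : Letter := (true, false)
def lb : Letter := (false, true)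
def lB : Letter := (false, false)
noncomputable def wordLength (g : B3) : ℕ :=
  sInf {n | ∃ w : List Letter, evalWord w = g ∧ w.length = n}

/-!
Conjugating by a prefix turns `u ++ v` into its cyclic permutation `v ++ u`, so a cyclic
permutation of a geodesic for a conjugacy-minimal element represents an element of the same
conjugacy class with a word of the same length; minimality makes that word geodesic. Geodesics
are freely reduced, and a geodesic whose first and last letters cancel would have a cyclic
permutation that is not freely reduced.
-/

@[simp]
lemma evalWord_cons (x : Letter) (w : List Letter) :
    evalWord (x :: w) = evalLetter x * evalWord w := by
  simp [evalWord]

@[simp]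
lemma evalWord_append (u v : List Letter) :
    evalWord (u ++ v) = evalWord u * evalWord v := by
  simp [evalWord]

lemma evalLetter_mul_eq_one {x y : Letter} (h : x.1 = y.1 ∧ x.2 = !y.2) :
    evalLetter x * evalLetter y = 1 := by
  obtain ⟨a, s⟩ := x
  obtain ⟨b, t⟩ := y
  obtain ⟨h1, h2⟩ := h
  simp only at h1 h2
  subst h1 h2
  cases t <;> simp [evalLetter]

lemma exists_shorter_of_not_reduced {w : List Letter} (h : ¬ Reduced w) :
    ∃ v : List Letter, evalWord v = evalWord w ∧ v.length + 2 = w.length := by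
  induction w with
  | nil => exact absurd List.isChain_nil h
  | cons x t ih =>
    cases t with
    | nil => exact absurd (List.isChain_singleton x) h
    | cons y s =>
      rw [Reduced, List.Chain', List.isChain_cons_cons, not_and_or, not_not] at h
      rcases h with hxy | hys
      · exact ⟨s, by simp [← mul_assoc, evalLetter_mul_eq_one hxy], rfl⟩
      · obtain ⟨v, hv, hl⟩ := ih hys
        exact ⟨x :: v, by simp [hv], by simp [← hl]⟩

lemma IsGeodesic.reduced {w : List Letter} (hw : IsGeodesic w) : Reduced w := by
  by_contra h
  obtain ⟨v, hv, hl⟩ := exists_shorter_of_not_reduced h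
  have := hw v hv
  omega

lemma wordLength_evalWord_le (w : List Letter) : wordLength (evalWord w) ≤ w.length :=
  Nat.sInf_le ⟨w, rfl, rfl⟩

lemma IsGeodesic.length_le_wordLength {w : List Letter} (hw : IsGeodesic w) :
    w.length ≤ wordLength (evalWord w) :=
  le_csInf ⟨w.length, w, rfl, rfl⟩ fun _ ⟨v, hv, hl⟩ => hl ▸ hw v hv

lemma isConj_evalWord_append_comm (u v : List Letter) :
    IsConj (evalWord (u ++ v)) (evalWord (v ++ u)) :=
  isConj_iff.mpr ⟨(evalWord u)⁻¹, by simp⟩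

lemma IsGeodesic.of_isConj {w v : List Letter} (hw : IsGeodesic w)
    (hmin : ∀ h : B3, IsConj (evalWord w) h → wordLength (evalWord w) ≤ wordLength h)
    (hconj : IsConj (evalWord w) (evalWord v)) (hlen : v.length ≤ w.length) :
    IsGeodesic v := fun t ht =>
  calc v.length ≤ w.length := hlen
    _ ≤ wordLength (evalWord w) := hw.length_le_wordLength
    _ ≤ wordLength (evalWord v) := hmin _ hconj
    _ = wordLength (evalWord t) := by rw [ht]
    _ ≤ t.length := wordLength_evalWord_le t

lemma head_getLast_not_inverse_of_reduced_rotate {w : List Letter}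
    (hrot : ∀ u v : List Letter, w = u ++ v → Reduced (v ++ u)) (x y : Letter)
    (hx : w.head? = some x) (hy : w.getLast? = some y) : ¬ (x.1 = y.1 ∧ x.2 = !y.2) := by
  rintro ⟨h1, h2⟩
  obtain ⟨u, rfl⟩ := List.getLast?_eq_some_iff.mp hy
  cases u with
  | nil =>
    obtain rfl : x = y := by simpa using hx.symm
    cases hs : x.2 <;> simp [hs] at h2
  | cons z m =>
    obtain rfl : x = z := by simpa using hx.symm
    have hred := hrot (x :: m) [y] rfl
    rw [Reduced, List.singleton_append, List.Chain', List.isChain_cons_cons] at hred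
    exact hred.1 ⟨h1.symm, by simp [h2]⟩

theorem stmt13 (g : B3) (hmin : ∀ h : B3, IsConj g h → wordLength g ≤ wordLength h)
    (w : List Letter) (hw : evalWord w = g) (hgeo : IsGeodesic w) :
    Reduced w ∧
    (∀ x y : Letter, w.head? = some x → w.getLast? = some y →
      ¬ (x.1 = y.1 ∧ x.2 = !y.2)) ∧
    (∀ u v : List Letter, w = u ++ v → IsGeodesic (v ++ u)) := by
  subst hw
  have hrot : ∀ u v : List Letter, w = u ++ v → IsGeodesic (v ++ u) := by
    rintro u v rfl
    exact hgeo.of_isConj hmin (isConj_evalWord_append_comm u v) (by simp [add_comm])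
  exact ⟨hgeo.reduced,
    head_getLast_not_inverse_of_reduced_rotate fun u v h => (hrot u v h).reduced, hrot⟩
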